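/- In a WNA algebra with products ∘_n defined via f, the identity f ∘_n a = L_f^n(a) - \sum_{k=1}^{n-1} p_{n-k} ∘ L_f^{k-1}(a) holds, where p_n := f ∘_n f and L_f denotes left multiplication by f. -/
import Mathlib


/-- The middle nucleus of a (possibly nonassociative) algebra. -/
def middleNucleus {A : Type*} [NonUnitalNonAssocRing A] : Set A :=
  {b : A | ∀ a c : A, (a * b) * c = a * (b * c)}

/-- The sequence of products `∘_{n+1}` built from an element `f` of a WNA algebra:
`circ f n a b` is `a ∘_{n+1} b`. -/
def circ {A : Type*} [NonUnitalNonAssocRing A] (f : A) : ℕ → A → A → A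
  | 0 => fun a b => a * b
  | n + 1 => fun a b => a * circ f n f b - circ f n (a * f) b

lemma circ_nucleus {A : Type*} [NonUnitalNonAssocRing A]
    (hWNA : ∀ a b c d : A, ((a * (b * c)) * d) = a * ((b * c) * d))
    (f : A) : ∀ (m : ℕ) (x y c a : A),
    (c * circ f m x y) * a = c * (circ f m x y * a) := by
  intro m
  induction m with
  | zero => intro x y c a; exact hWNA c x y a
  | succ m ih =>
    intro x y c a
    show (c * (x * circ f m f y - circ f m (x * f) y)) * a
        = c * ((x * circ f m f y - circ f m (x * f) y) * a)
    rw [mul_sub, sub_mul, sub_mul, mul_sub, hWNA c x (circ f m f y) a, ih (x * f) y c a]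

lemma circ_shift {A : Type*} [NonUnitalNonAssocRing A]
    (hWNA : ∀ a b c d : A, ((a * (b * c)) * d) = a * ((b * c) * d))
    (f : A) : ∀ (m : ℕ) (x a : A),
    circ f (m + 1) x a = circ f m x (f * a) - circ f m x f * a := by
  intro m
  induction m with
  | zero => intro x a; rfl
  | succ m ih =>
    intro x a
    show x * circ f (m + 1) f a - circ f (m + 1) (x * f) a
        = (x * circ f m f (f * a) - circ f m (x * f) (f * a))
          - (x * circ f m f f - circ f m (x * f) f) * a
    rw [ih f a, ih (x * f) a, mul_sub, sub_mul, circ_nucleus hWNA f m f f x a]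
    abel

lemma circ_formula {A : Type*} [NonUnitalNonAssocRing A]
    (hWNA : ∀ a b c d : A, ((a * (b * c)) * d) = a * ((b * c) * d))
    (f : A) (Lf : A → A) (hLf : ∀ a, Lf a = f * a) :
    ∀ (m : ℕ) (a : A),
      circ f m f a = Lf^[m + 1] a
        - ∑ j ∈ Finset.range m, circ f (m - j - 1) f f * Lf^[j] a := by
  intro m
  induction m with
  | zero =>
    intro a
    simp [circ, hLf]
  | succ m ih =>
    intro a
    rw [circ_shift hWNA f m f a, ih (f * a), Finset.sum_range_succ']
    have hfa : f * a = Lf a := (hLf a).symm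
    have hit : ∀ (j : ℕ) (b : A), Lf^[j] (Lf b) = Lf^[j + 1] b := by
      intro j b
      rw [← Function.iterate_succ_apply]
    simp only [hfa, hit, Nat.succ_sub_succ, Nat.sub_zero, Function.iterate_zero_apply]
    abel

/-- `f ∘_n a = L_f^n a - ∑_{k=1}^{n-1} p_{n-k} ∘ L_f^{k-1} a`, where
`p_j = f ∘_j f` and `L_f` is left multiplication by `f`. -/
theorem circ_f_left_formula
    {A : Type*} [NonUnitalNonAssocRing A]
    (hWNA : ∀ a b c d : A, ((a * (b * c)) * d) = a * ((b * c) * d))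
    (hNA : ¬ ∀ a b c : A, (a * b) * c = a * (b * c))
    (f : A) (hf : f ∉ middleNucleus)
    (p : ℕ → A) (hp : ∀ k, 1 ≤ k → p k = circ f (k - 1) f f)
    (Lf : A → A) (hLf : ∀ a, Lf a = f * a) :
    ∀ (n : ℕ), 1 ≤ n → ∀ a : A,
      circ f (n - 1) f a
        = Lf^[n] a - ∑ k ∈ Finset.Icc 1 (n - 1), p (n - k) * Lf^[k - 1] a := by
  intro n hn a
  obtain ⟨m, rfl⟩ : ∃ m, n = m + 1 := ⟨n - 1, by omega⟩
  have h := circ_formula hWNA f Lf hLf m a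
  simp only [Nat.add_sub_cancel]
  rw [h]
  congr 1
  have : Finset.Icc 1 m = Finset.Ico 1 (m + 1) := by
    rw [Finset.Ico_add_one_right_eq_Icc]
  rw [this, Finset.sum_Ico_eq_sum_range]
  apply Finset.sum_congr (by congr 1)
  intro j hj
  rw [Finset.mem_range] at hj
  rw [hp (m + 1 - (1 + j)) (by omega)]
  congr 2 <;> omega
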